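/- The smooth map Φ: ℝ⁶ → ℝ⁶ given by y⁰ = x⁰ + x¹x⁴ + 3x⁵x²x⁴ − (x⁵)³(x⁴)², y¹ = x¹ + (x⁵)³x⁴, y² = x² − (x⁵)²x⁴, y³ = x³ + x⁵x⁴, y⁴ = x⁵, y⁵ = x⁴ is a diffeomorphism of ℝ⁶, and under this change of coordinates one has the identities dy⁰ − y⁵dy¹ − 3y⁴y⁵dy² − 3(y² + y⁵(y⁴)²)dy³ = dx⁰ + x¹dx⁴ − 3x²dx³, dy¹ + 3y⁴dy² + 3(y⁴)²dy³ = dx¹ + 3x⁵dx² + 3(x⁵)²dx³ + (x⁵)³dx⁴, dy² + 2y⁴dy³ = dx² + 2x⁵dx³ + (x⁵)²dx⁴, dy³ − y⁵dy⁴ = dx³ + x⁵dx⁴, dy⁵ = dx⁴, and −dy⁴ = −dx⁵. -/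

import Mathlib

/-!
Φ is triangular: (y⁴, y⁵) is a permutation of (x⁴, x⁵), each of y¹, y², y³ is xⁱ plus a polynomial
in (x⁴, x⁵), and y⁰ is x⁰ plus a polynomial in (x¹, x², x⁴, x⁵). Back-substitution therefore gives a
polynomial inverse, and once the Jacobian of Φ is written out, the six identities of 1-forms are
polynomial identities.
-/

/-- The coordinate change adapted to the `G₂` double fibration. -/
def PhiSix : (Fin 6 → ℝ) → Fin 6 → ℝ := fun x =>
  ![x 0 + x 1 * x 4 + 3 * x 5 * x 2 * x 4 - (x 5) ^ 3 * (x 4) ^ 2,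
    x 1 + (x 5) ^ 3 * x 4,
    x 2 - (x 5) ^ 2 * x 4,
    x 3 + x 5 * x 4,
    x 5,
    x 4]

section
variable {𝕜 E F : Type*} [NontriviallyNormedField 𝕜] [NormedAddCommGroup E] [NormedSpace 𝕜 E]
  [NormedAddCommGroup F] [NormedSpace 𝕜 F] {k : WithTop ℕ∞} {n : ℕ}

@[fun_prop]
theorem ContDiff.vecCons {f : E → F} {g : E → Fin n → F} (hf : ContDiff 𝕜 k f)
    (hg : ContDiff 𝕜 k g) : ContDiff 𝕜 k fun x => Matrix.vecCons (f x) (g x) :=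
  contDiff_pi.2 fun i => Fin.cases (by simpa) (fun j => by simpa using contDiff_pi.1 hg j) i

theorem fderiv_eval {ι : Type*} [Fintype ι] (i : ι) (x : ι → 𝕜) :
    fderiv 𝕜 (fun y : ι → 𝕜 => y i) x = ContinuousLinearMap.proj i :=
  (hasFDerivAt_apply i x).fderiv
end

theorem contDiff_PhiSix : ContDiff ℝ (⊤ : ℕ∞) PhiSix := by unfold PhiSix; fun_prop

theorem fderiv_PhiSix_apply (x v : Fin 6 → ℝ) :
    fderiv ℝ PhiSix x v =
      ![v 0 + x 4 * v 1 + 3 * x 5 * x 4 * v 2 + (x 1 + 3 * x 5 * x 2 - 2 * x 5 ^ 3 * x 4) * v 4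
          + (3 * x 2 * x 4 - 3 * x 5 ^ 2 * x 4 ^ 2) * v 5,
        v 1 + x 5 ^ 3 * v 4 + 3 * x 5 ^ 2 * x 4 * v 5,
        v 2 - x 5 ^ 2 * v 4 - 2 * x 5 * x 4 * v 5,
        v 3 + x 5 * v 4 + x 4 * v 5,
        v 5,
        v 4] := by
  have hΦ : DifferentiableAt ℝ PhiSix x := contDiff_PhiSix.differentiable (by simp) x
  ext i
  rw [show fderiv ℝ PhiSix x v i = fderiv ℝ (fun y => PhiSix y i) x v by simp [fderiv_apply hΦ]]
  fin_cases i <;>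
    simp (disch := fun_prop) only [PhiSix, Fin.reduceFinMk, Matrix.cons_val,
      fderiv_fun_add, fderiv_fun_sub, fderiv_fun_mul, fderiv_fun_pow, fderiv_fun_const,
      fderiv_eval, add_apply, sub_apply, smul_apply, ContinuousLinearMap.proj_apply,
      Pi.zero_apply, zero_apply, smul_eq_mul] <;>
    ring

def PhiSixInv : (Fin 6 → ℝ) → Fin 6 → ℝ := fun y =>
  ![y 0 - y 1 * y 5 - 3 * y 4 * y 2 * y 5 - (y 4) ^ 3 * (y 5) ^ 2,
    y 1 - (y 4) ^ 3 * y 5,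
    y 2 + (y 4) ^ 2 * y 5,
    y 3 - y 4 * y 5,
    y 5,
    y 4]

theorem leftInverse_PhiSixInv : Function.LeftInverse PhiSixInv PhiSix := fun x => by
  ext i
  fin_cases i <;> simp only [PhiSix, PhiSixInv, Fin.reduceFinMk, Matrix.cons_val] <;> ring

theorem rightInverse_PhiSixInv : Function.RightInverse PhiSixInv PhiSix := fun y => by
  ext i
  fin_cases i <;> simp only [PhiSix, PhiSixInv, Fin.reduceFinMk, Matrix.cons_val] <;> ring

theorem contDiff_PhiSixInv : ContDiff ℝ (⊤ : ℕ∞) PhiSixInv := by unfold PhiSixInv; fun_prop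

/-- `PhiSix` is a diffeomorphism of `ℝ⁶` and the stated identities of 1-forms hold,
i.e. the pullbacks of the six `y`-coframe forms along `PhiSix` equal the corresponding
`x`-coframe forms. -/
theorem coordinate_change_double_fibration :
    (ContDiff ℝ (⊤ : ℕ∞) PhiSix ∧
      ∃ Ψ : (Fin 6 → ℝ) → Fin 6 → ℝ, ContDiff ℝ (⊤ : ℕ∞) Ψ ∧
        Function.LeftInverse Ψ PhiSix ∧ Function.RightInverse Ψ PhiSix) ∧
    ∀ x v : Fin 6 → ℝ,
      let y := PhiSix x
      let dy := fderiv ℝ PhiSix x v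
      (dy 0 - y 5 * dy 1 - 3 * y 4 * y 5 * dy 2 - 3 * (y 2 + y 5 * (y 4) ^ 2) * dy 3 =
          v 0 + x 1 * v 4 - 3 * x 2 * v 3) ∧
      (dy 1 + 3 * y 4 * dy 2 + 3 * (y 4) ^ 2 * dy 3 =
          v 1 + 3 * x 5 * v 2 + 3 * (x 5) ^ 2 * v 3 + (x 5) ^ 3 * v 4) ∧
      (dy 2 + 2 * y 4 * dy 3 = v 2 + 2 * x 5 * v 3 + (x 5) ^ 2 * v 4) ∧
      (dy 3 - y 5 * dy 4 = v 3 + x 5 * v 4) ∧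
      (dy 5 = v 4) ∧
      (-dy 4 = -v 5) := by
  refine ⟨⟨contDiff_PhiSix, PhiSixInv, contDiff_PhiSixInv, leftInverse_PhiSixInv,
    rightInverse_PhiSixInv⟩, fun x v => ?_⟩
  refine ⟨?_, ?_, ?_, ?_, ?_, ?_⟩ <;>
    simp only [fderiv_PhiSix_apply, PhiSix, Matrix.cons_val] <;> ring
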